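/- arXiv:1506.07719 — 3 statements merged into one kernel-verified Lean document; each statement's English description precedes it below -/
import Mathlib

section
/- Let X ⊂ ℝ^n be nonempty convex compact, Q symmetric positive definite, q > 0, c ∈ ℝ^n, and let C ∈ ℝ^{n×n} be symmetric negative definite with −qQ ⪯ C (i.e. qQ + C positive semidefinite). Let x⋆(z) := argmin_{x∈X} [ q xᵀQx + 2(Cz + c)ᵀx ]. Then x⋆ is firmly nonexpansive in the (−C)-norm: for all v, w ∈ ℝ^n, ‖x⋆(v) − x⋆(w)‖²_{−C} ≤ (v − w)ᵀ(−C)(x⋆(v) − x⋆(w)). (Lemma 6, statement 3.) -/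
open Matrix Filter Topology Finset
open scoped Kronecker

noncomputable section

/-- Euclidean norm of a finitely-indexed real vector. -/
def eunorm {ι : Type*} [Fintype ι] (x : ι → ℝ) : ℝ := Real.sqrt (x ⬝ᵥ x)

/-- `S`-weighted norm `‖x‖_S = √(xᵀ S x)`. -/
def wnorm {ι : Type*} [Fintype ι] (S : Matrix ι ι ℝ) (x : ι → ℝ) : ℝ :=
  Real.sqrt (x ⬝ᵥ S.mulVec x)

/-- Quadratic cost `J(x,z) = q·xᵀQx + 2(Cz+c)ᵀx`. -/
def cost {n : ℕ} (Q C : Matrix (Fin n) (Fin n) ℝ) (qi : ℝ) (ci : Fin n → ℝ)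
    (x z : Fin n → ℝ) : ℝ :=
  qi * (x ⬝ᵥ Q.mulVec x) + 2 * ((C.mulVec z + ci) ⬝ᵥ x)

/-- `xst` is the optimal-response map: for every `z`, `xst z` minimizes the cost over `X`. -/
def IsOptResp {n : ℕ} (X : Set (Fin n → ℝ)) (Q C : Matrix (Fin n) (Fin n) ℝ)
    (qi : ℝ) (ci : Fin n → ℝ) (xst : (Fin n → ℝ) → (Fin n → ℝ)) : Prop :=
  ∀ z, xst z ∈ X ∧ ∀ y ∈ X, cost Q C qi ci (xst z) z ≤ cost Q C qi ci y z

/-- Stacked optimal responses `x⋆(z) = (x^{1⋆}(z^1);…;x^{N⋆}(z^N))`. -/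
def extMap {n N : ℕ} (xstar : Fin N → (Fin n → ℝ) → (Fin n → ℝ))
    (z : Fin N × Fin n → ℝ) : Fin N × Fin n → ℝ :=
  fun p => xstar p.1 (fun j => z (p.1, j)) p.2

/-- Extended aggregation map `A_ν(z) = (P^ν ⊗ I_n) x⋆(z)`. -/
def aggMap {n N : ℕ} (P : Matrix (Fin N) (Fin N) ℝ) (ν : ℕ)
    (xstar : Fin N → (Fin n → ℝ) → (Fin n → ℝ)) (z : Fin N × Fin n → ℝ) :
    Fin N × Fin n → ℝ :=
  ((P ^ ν) ⊗ₖ (1 : Matrix (Fin n) (Fin n) ℝ)).mulVec (extMap xstar z)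

/-- The matrix `(1/N)·1_N 1_Nᵀ` with all entries `1/N`. -/
def avgMat (N : ℕ) : Matrix (Fin N) (Fin N) ℝ := Matrix.of fun _ _ => (N : ℝ)⁻¹

/-- Mean-field aggregation map `A(z) = ((1/N)·1 1ᵀ ⊗ I_n) x⋆(z)`. -/
def meanAgg {n N : ℕ} (xstar : Fin N → (Fin n → ℝ) → (Fin n → ℝ))
    (z : Fin N × Fin n → ℝ) : Fin N × Fin n → ℝ :=
  ((avgMat N) ⊗ₖ (1 : Matrix (Fin n) (Fin n) ℝ)).mulVec (extMap xstar z)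

/-- Maximum-row-sum matrix norm `‖A‖_∞`. -/
def rowSumNorm {N : ℕ} (A : Matrix (Fin N) (Fin N) ℝ) : ℝ := ⨆ i, ∑ j, |A i j|

/-- Spectral norm (ℓ²-operator norm) of a real matrix. -/
def specNorm {ι : Type*} [Fintype ι] [DecidableEq ι] (P : Matrix ι ι ℝ) : ℝ :=
  ‖LinearMap.toContinuousLinearMap (Matrix.toEuclideanLin P)‖

/-- Map `A_{m,m}(z) = (P^m ⊗ I_n) x⋆((P^m ⊗ I_n) z)`. -/
def halfAgg {n N : ℕ} (P : Matrix (Fin N) (Fin N) ℝ) (m : ℕ)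
    (xstar : Fin N → (Fin n → ℝ) → (Fin n → ℝ)) (z : Fin N × Fin n → ℝ) :
    Fin N × Fin n → ℝ :=
  ((P ^ m) ⊗ₖ (1 : Matrix (Fin n) (Fin n) ℝ)).mulVec
    (extMap xstar (((P ^ m) ⊗ₖ (1 : Matrix (Fin n) (Fin n) ℝ)).mulVec z))

/-
The first-order optimality condition of `x⋆(z)` over the convex set `X` is a variational
inequality. Adding the inequalities at `v` (tested against `x⋆(w)`) and at `w` (tested against
`x⋆(v)`) cancels everything but `q‖d‖²_Q ≤ (v - w)ᵀ(-C)d` for `d = x⋆(v) - x⋆(w)`, and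
`-C ⪯ qQ` bounds the left side from below by `‖d‖²_{-C}`.
-/

lemma wnorm_sq {ι : Type*} [Fintype ι] {S : Matrix ι ι ℝ} (hS : S.PosSemidef) (x : ι → ℝ) :
    wnorm S x ^ 2 = x ⬝ᵥ S *ᵥ x :=
  Real.sq_sqrt (by simpa using hS.dotProduct_mulVec_nonneg x)

lemma nonneg_of_forall_mul_add_sq_mul_nonneg {g M : ℝ}
    (h : ∀ t ∈ Set.Ioc (0 : ℝ) 1, 0 ≤ t * g + t ^ 2 * M) : 0 ≤ g := by
  have hlim : Tendsto (fun t : ℝ => g + t * M) (𝓝[>] 0) (𝓝 g) := by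
    have : Continuous fun t : ℝ => g + t * M := by fun_prop
    simpa using (this.tendsto 0).mono_left nhdsWithin_le_nhds
  refine ge_of_tendsto hlim ?_
  filter_upwards [Ioo_mem_nhdsGT one_pos] with t ht
  refine nonneg_of_mul_nonneg_right ?_ ht.1
  linarith [h t ⟨ht.1, ht.2.le⟩]

section OptResp

variable {n : ℕ} {X : Set (Fin n → ℝ)} {Q C : Matrix (Fin n) (Fin n) ℝ} {q : ℝ}
  {c : Fin n → ℝ} {xstar : (Fin n → ℝ) → (Fin n → ℝ)}

lemma cost_add_smul (x d z : Fin n → ℝ) (t : ℝ) :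
    cost Q C q c (x + t • d) z
      = cost Q C q c x z
        + t * (q * (x ⬝ᵥ Q *ᵥ d + d ⬝ᵥ Q *ᵥ x) + 2 * ((C *ᵥ z + c) ⬝ᵥ d))
        + t ^ 2 * (q * (d ⬝ᵥ Q *ᵥ d)) := by
  simp only [cost, mulVec_add, mulVec_smul, dotProduct_add, add_dotProduct, smul_dotProduct,
    dotProduct_smul, smul_eq_mul]
  ring

lemma IsOptResp.variational_ineq (hconv : Convex ℝ X) (hxstar : IsOptResp X Q C q c xstar)
    (z : Fin n → ℝ) {y : Fin n → ℝ} (hy : y ∈ X) :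
    0 ≤ q * (xstar z ⬝ᵥ Q *ᵥ (y - xstar z) + (y - xstar z) ⬝ᵥ Q *ᵥ xstar z)
      + 2 * ((C *ᵥ z + c) ⬝ᵥ (y - xstar z)) := by
  refine nonneg_of_forall_mul_add_sq_mul_nonneg
    (M := q * ((y - xstar z) ⬝ᵥ Q *ᵥ (y - xstar z))) fun t ht => ?_
  have hmem := hconv.add_smul_sub_mem (hxstar z).1 hy (Set.Ioc_subset_Icc_self ht)
  have hmin := (hxstar z).2 _ hmem
  rw [cost_add_smul] at hmin
  linarith

lemma IsOptResp.mul_quadForm_le (hconv : Convex ℝ X) (hxstar : IsOptResp X Q C q c xstar)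
    (v w : Fin n → ℝ) :
    q * ((xstar v - xstar w) ⬝ᵥ Q *ᵥ (xstar v - xstar w))
      ≤ (-C *ᵥ (v - w)) ⬝ᵥ (xstar v - xstar w) := by
  have hv := hxstar.variational_ineq hconv v (hxstar w).1
  have hw := hxstar.variational_ineq hconv w (hxstar v).1
  simp only [neg_mulVec, mulVec_sub, dotProduct_sub, sub_dotProduct, neg_dotProduct,
    add_dotProduct] at hv hw ⊢
  linarith

end OptResp

theorem optResp_firmlyNonexpansive_general {n : ℕ}
    (X : Set (Fin n → ℝ))
    (hconv : Convex ℝ X)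
    (Q : Matrix (Fin n) (Fin n) ℝ) (q : ℝ)
    (C : Matrix (Fin n) (Fin n) ℝ) (c : Fin n → ℝ)
    (hC : (-C).PosDef) (hqQC : (q • Q + C).PosSemidef)
    (xstar : (Fin n → ℝ) → (Fin n → ℝ))
    (hxstar : IsOptResp X Q C q c xstar) :
    ∀ v w : Fin n → ℝ,
      wnorm (-C) (xstar v - xstar w) ^ 2
        ≤ (v - w) ⬝ᵥ ((-C).mulVec (xstar v - xstar w)) := by
  intro v w
  have hmono := hxstar.mul_quadForm_le hconv v w
  set d := xstar v - xstar w
  have hCQ : d ⬝ᵥ (-C) *ᵥ d ≤ q * (d ⬝ᵥ Q *ᵥ d) := by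
    have hpsd := hqQC.dotProduct_mulVec_nonneg d
    simp only [star_trivial, add_mulVec, smul_mulVec, dotProduct_add, dotProduct_smul,
      smul_eq_mul] at hpsd
    simp only [neg_mulVec, dotProduct_neg]
    linarith
  have hsymm : (-C)ᵀ = -C := by simpa using hC.isHermitian.eq
  rw [← hsymm, mulVec_transpose, ← dotProduct_mulVec] at hmono
  rw [wnorm_sq hC.posSemidef]
  linarith

/-- Lemma 6, statement 3: if `C` is symmetric negative definite with
`−qQ ⪯ C`, then `x⋆` is firmly nonexpansive in the `(−C)`-norm. -/
theorem optResp_firmlyNonexpansive {n : ℕ} (hn : 0 < n)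
    (X : Set (Fin n → ℝ)) (hne : X.Nonempty)
    (hconv : Convex ℝ X) (hcpt : IsCompact X)
    (Q : Matrix (Fin n) (Fin n) ℝ) (hQ : Q.PosDef) (q : ℝ) (hq : 0 < q)
    (C : Matrix (Fin n) (Fin n) ℝ) (c : Fin n → ℝ)
    (hC : (-C).PosDef) (hqQC : (q • Q + C).PosSemidef)
    (xstar : (Fin n → ℝ) → (Fin n → ℝ))
    (hxstar : IsOptResp X Q C q c xstar) :
    ∀ v w : Fin n → ℝ,
      wnorm (-C) (xstar v - xstar w) ^ 2
        ≤ (v - w) ⬝ᵥ ((-C).mulVec (xstar v - xstar w)) :=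
  optResp_firmlyNonexpansive_general X hconv Q q C c hC hqQC xstar hxstar
end
end

section
/- Let X ⊂ ℝ^n be nonempty convex compact, Q symmetric positive definite, q > 0, c ∈ ℝ^n, and let C ∈ ℝ^{n×n} be symmetric positive definite. Let x⋆(z) := argmin_{x∈X} [ q xᵀQx + 2(Cz + c)ᵀx ]. Then −x⋆ is monotone in the C-inner product: for all v, w ∈ ℝ^n, (−x⋆(v) + x⋆(w))ᵀ C (v − w) ≥ 0. (Lemma 6, statement 4.) -/
open Matrix Filter Topology Finset
open scoped Kronecker

noncomputable section

/-- Lemma 6, statement 4: if `C` is symmetric positive definite, then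
`−x⋆` is monotone in the `C`-inner product. -/
theorem neg_optResp_monotone {n : ℕ} (hn : 0 < n)
    (X : Set (Fin n → ℝ)) (hne : X.Nonempty)
    (hconv : Convex ℝ X) (hcpt : IsCompact X)
    (Q : Matrix (Fin n) (Fin n) ℝ) (hQ : Q.PosDef) (q : ℝ) (hq : 0 < q)
    (C : Matrix (Fin n) (Fin n) ℝ) (c : Fin n → ℝ)
    (hC : C.PosDef)
    (xstar : (Fin n → ℝ) → (Fin n → ℝ))
    (hxstar : IsOptResp X Q C q c xstar) :
    ∀ v w : Fin n → ℝ,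
      0 ≤ (-(xstar v) + xstar w) ⬝ᵥ (C.mulVec (v - w)) := by
  intro v w
  have h1 := (hxstar v).2 (xstar w) (hxstar w).1
  have h2 := (hxstar w).2 (xstar v) (hxstar v).1
  simp only [cost] at h1 h2
  have e : (-(xstar v) + xstar w) ⬝ᵥ (C.mulVec (v - w))
      = ((C.mulVec v + c) ⬝ᵥ xstar w + (C.mulVec w + c) ⬝ᵥ xstar v)
        - ((C.mulVec v + c) ⬝ᵥ xstar v + (C.mulVec w + c) ⬝ᵥ xstar w) := by
    simp [Matrix.mulVec_sub, dotProduct_comm, sub_dotProduct, add_dotProduct,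
      dotProduct_add, dotProduct_sub, neg_add_eq_sub]
    ring
  rw [e]
  linarith
end
end

section
/- Let P_M ∈ ℝ^{M×M} be entrywise nonnegative with lim_{ν→∞} P_M^ν = (1/M)·1_M 1_Mᵀ, let B ∈ ℕ, N := MB, and define P := P_M ⊗ (1/B)·1_B 1_Bᵀ ∈ ℝ^{N×N}. Then: (i) lim_{ν→∞} P^ν = (1/N)·1_N 1_Nᵀ; (ii) the spectral norms satisfy ‖P‖₂ = ‖P_M‖₂, so ‖P_M‖₂ ≤ 1 implies ‖P‖₂ ≤ 1. (Lemma 10 / hierarchical-control lemma.) -/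
open Matrix Filter Topology Finset
open scoped Kronecker

noncomputable section

/-!
The matrix `J = (1/B)·1 1ᵀ` is idempotent, so `(P_M ⊗ J)^ν = P_M^ν ⊗ J` for `ν ≥ 1` and the
limit of the powers is read off entrywise. For the norm, `P_M ⊗ J = E P_M Eᵀ` with the isometry
`E = I_M ⊗ (1/√B)·1_B`; conjugation by an isometry preserves the spectral norm, because
`‖E‖ ≤ 1` and `P_M = Eᵀ (E P_M Eᵀ) E`.
-/

open scoped Matrix.Norms.L2Operator

namespace Matrix

theorem kronecker_pow {m n α : Type*} [Fintype m] [Fintype n] [DecidableEq m] [DecidableEq n]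
    [CommSemiring α] (A : Matrix m m α) (C : Matrix n n α) (k : ℕ) :
    (A ⊗ₖ C) ^ k = (A ^ k) ⊗ₖ (C ^ k) := by
  induction k with
  | zero => simp
  | succ k ih => rw [pow_succ, ih, ← mul_kronecker_mul, ← pow_succ, ← pow_succ]

theorem tendsto_kronecker_pow_of_isIdempotentElem {m n α : Type*} [Fintype m] [Fintype n]
    [DecidableEq m] [DecidableEq n] [CommSemiring α] [TopologicalSpace α] [ContinuousMul α]
    {A L : Matrix m m α} (hA : ∀ i j, Tendsto (fun ν : ℕ => (A ^ ν) i j) atTop (𝓝 (L i j)))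
    {C : Matrix n n α} (hC : IsIdempotentElem C) (i j : m × n) :
    Tendsto (fun ν : ℕ => ((A ⊗ₖ C) ^ ν) i j) atTop (𝓝 (L i.1 j.1 * C i.2 j.2)) := by
  rw [← tendsto_add_atTop_iff_nat 1]
  simp only [kronecker_pow, hC.pow_succ_eq, kroneckerMap_apply]
  exact ((hA i.1 j.1).comp (tendsto_add_atTop_nat 1)).mul_const _

section L2OpNorm

variable {𝕜 m n : Type*} [RCLike 𝕜] [Fintype m] [Fintype n] [DecidableEq m] [DecidableEq n]

theorem l2_opNorm_one_le : ‖(1 : Matrix n n 𝕜)‖ ≤ 1 := by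
  rw [← diagonal_one, l2_opNorm_diagonal]
  exact pi_norm_le_iff_of_nonneg zero_le_one |>.mpr fun _ => by simp

omit [DecidableEq m] in
theorem l2_opNorm_le_one_of_conjTranspose_mul_self_eq_one {E : Matrix m n 𝕜}
    (hE : Eᴴ * E = 1) : ‖E‖ ≤ 1 := by
  have h : ‖E‖ * ‖E‖ ≤ 1 := by rw [← l2_opNorm_conjTranspose_mul_self, hE]; exact l2_opNorm_one_le
  nlinarith [norm_nonneg E]

theorem l2_opNorm_mul_mul_le_of_le_one {l : Type*} [Fintype l] [DecidableEq l] {X : Matrix l m 𝕜}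
    {Y : Matrix n l 𝕜} (hX : ‖X‖ ≤ 1) (hY : ‖Y‖ ≤ 1) (A : Matrix m n 𝕜) : ‖X * A * Y‖ ≤ ‖A‖ :=
  calc ‖X * A * Y‖ ≤ ‖X‖ * ‖A‖ * ‖Y‖ :=
        (l2_opNorm_mul _ _).trans (by gcongr; exact l2_opNorm_mul _ _)
    _ ≤ 1 * ‖A‖ * 1 := by gcongr
    _ = ‖A‖ := by ring

theorem l2_opNorm_mul_mul_conjTranspose_of_conjTranspose_mul_self_eq_one {E : Matrix m n 𝕜}
    (hE : Eᴴ * E = 1) (A : Matrix n n 𝕜) : ‖E * A * Eᴴ‖ = ‖A‖ := by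
  have hE_le : ‖E‖ ≤ 1 := l2_opNorm_le_one_of_conjTranspose_mul_self_eq_one hE
  have hEH_le : ‖Eᴴ‖ ≤ 1 := (l2_opNorm_conjTranspose E).le.trans hE_le
  refine le_antisymm (l2_opNorm_mul_mul_le_of_le_one hE_le hEH_le A) ?_
  have hA : Eᴴ * (E * A * Eᴴ) * E = A := by
    simp only [← Matrix.mul_assoc, hE, Matrix.one_mul]
    rw [Matrix.mul_assoc, hE, Matrix.mul_one]
  calc ‖A‖ = ‖Eᴴ * (E * A * Eᴴ) * E‖ := by rw [hA]
    _ ≤ ‖E * A * Eᴴ‖ := l2_opNorm_mul_mul_le_of_le_one hEH_le hE_le _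

end L2OpNorm

end Matrix

theorem specNorm_eq_l2_opNorm {ι : Type*} [Fintype ι] [DecidableEq ι] (A : Matrix ι ι ℝ) :
    specNorm A = ‖A‖ := rfl

theorem isIdempotentElem_avgMat (B : ℕ) : IsIdempotentElem (avgMat B) := by
  ext i j
  rcases Nat.eq_zero_or_pos B with rfl | hB
  · exact i.elim0
  · simp only [avgMat, mul_apply, of_apply, sum_const, card_univ, Fintype.card_fin, nsmul_eq_mul]
    field_simp

def avgIsometry (m : Type*) [DecidableEq m] (B : ℕ) : Matrix (m × Fin B) m ℝ :=
  of fun p i => (Real.sqrt B)⁻¹ * (1 : Matrix m m ℝ) p.1 i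

theorem avgIsometry_conjTranspose_mul_self {m : Type*} [Fintype m] [DecidableEq m] {B : ℕ}
    (hB : 0 < B) : (avgIsometry m B)ᴴ * avgIsometry m B = 1 := by
  ext i j
  simp only [avgIsometry, conjTranspose_eq_transpose_of_trivial, mul_apply, transpose_apply,
    of_apply, Fintype.sum_prod_type, one_apply, mul_ite, ite_mul, mul_one, mul_zero, zero_mul,
    sum_ite_irrel, sum_const_zero, sum_ite_eq', mem_univ, ↓reduceIte]
  rw [← mul_inv, Real.mul_self_sqrt B.cast_nonneg]
  rcases eq_or_ne i j with rfl | hij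
  · simp [(Nat.cast_pos.mpr hB).ne']
  · simp [hij, hij.symm]

theorem avgIsometry_mul_mul_conjTranspose {m : Type*} [Fintype m] [DecidableEq m]
    (A : Matrix m m ℝ) (B : ℕ) : avgIsometry m B * A * (avgIsometry m B)ᴴ = A ⊗ₖ avgMat B := by
  ext p q
  simp only [avgIsometry, avgMat, conjTranspose_eq_transpose_of_trivial, mul_apply,
    transpose_apply, of_apply, kroneckerMap_apply, one_apply, mul_ite, ite_mul, mul_one, mul_zero,
    zero_mul, sum_ite_eq, mem_univ, ↓reduceIte]
  rw [mul_right_comm, ← mul_inv, Real.mul_self_sqrt B.cast_nonneg, mul_comm]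

theorem specNorm_kronecker_avgMat {m : Type*} [Fintype m] [DecidableEq m] (A : Matrix m m ℝ)
    {B : ℕ} (hB : 0 < B) : specNorm (A ⊗ₖ avgMat B) = specNorm A := by
  rw [specNorm_eq_l2_opNorm, specNorm_eq_l2_opNorm, ← avgIsometry_mul_mul_conjTranspose]
  exact l2_opNorm_mul_mul_conjTranspose_of_conjTranspose_mul_self_eq_one
    (avgIsometry_conjTranspose_mul_self hB) A

theorem hierarchical_kronecker_lemma_general {M B : ℕ} (hB : 0 < B)
    (PM : Matrix (Fin M) (Fin M) ℝ)
    (hlim : ∀ i j, Tendsto (fun ν : ℕ => (PM ^ ν) i j) atTop (𝓝 ((M : ℝ)⁻¹))) :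
    (∀ i j : Fin M × Fin B,
      Tendsto (fun ν : ℕ => ((PM ⊗ₖ avgMat B) ^ ν) i j) atTop
        (𝓝 (((M : ℝ) * (B : ℝ))⁻¹))) ∧
    specNorm (PM ⊗ₖ avgMat B) = specNorm PM ∧
    (specNorm PM ≤ 1 → specNorm (PM ⊗ₖ avgMat B) ≤ 1) := by
  have hnorm := specNorm_kronecker_avgMat PM hB
  refine ⟨fun i j => ?_, hnorm, fun h => hnorm.le.trans h⟩
  simpa only [mul_inv, avgMat, of_apply] using
    tendsto_kronecker_pow_of_isIdempotentElem (L := of fun _ _ => (M : ℝ)⁻¹) hlim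
      (isIdempotentElem_avgMat B) i j

/-- hierarchical-control lemma: if `P_M^ν → (1/M)·1 1ᵀ` entrywise and
`P := P_M ⊗ (1/B)·1 1ᵀ`, then `P^ν → (1/(MB))·1 1ᵀ` entrywise, the spectral norms of `P`
and `P_M` coincide, and in particular `‖P_M‖₂ ≤ 1` implies `‖P‖₂ ≤ 1`. -/
theorem hierarchical_kronecker_lemma {M B : ℕ} (hM : 0 < M) (hB : 0 < B)
    (PM : Matrix (Fin M) (Fin M) ℝ) (hnn : ∀ i j, 0 ≤ PM i j)
    (hlim : ∀ i j, Tendsto (fun ν : ℕ => (PM ^ ν) i j) atTop (𝓝 ((M : ℝ)⁻¹))) :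
    (∀ i j : Fin M × Fin B,
      Tendsto (fun ν : ℕ => ((PM ⊗ₖ avgMat B) ^ ν) i j) atTop
        (𝓝 (((M : ℝ) * (B : ℝ))⁻¹))) ∧
    specNorm (PM ⊗ₖ avgMat B) = specNorm PM ∧
    (specNorm PM ≤ 1 → specNorm (PM ⊗ₖ avgMat B) ≤ 1) :=
  hierarchical_kronecker_lemma_general hB PM hlim
end
end
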